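/- Let K be a d-dimensional simplicial complex that collapses to a (d−1)-dimensional complex L via a sequence of elementary collapses with free faces σ₁, …, σ_{m−1} and corresponding unique maximal cofaces τ₁, …, τ_{m−1}, and let M ⊆ K be a d-dimensional simplicial complex to which K also collapses. Let j be the smallest index such that τ_j ∈ M, and let η be any (d−1)-dimensional face with σ_j ⊆ η ⊊ τ_j. Then τ_j is the unique d-dimensional face of M containing η; in particular, η is a free face of M. -/

import Mathlib

/-- An (abstract) simplicial complex: a finite family of finite sets closed
under taking subsets. -/
def IsComplex {V : Type*} (K : Finset (Finset V)) : Prop :=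
  ∀ α ∈ K, ∀ β ⊆ α, β ∈ K

/-- A face `τ` of `K` is maximal if no face of `K` strictly contains it. -/
def IsMaximalFace {V : Type*} (K : Finset (Finset V)) (τ : Finset V) : Prop :=
  τ ∈ K ∧ ∀ η ∈ K, τ ⊆ η → η = τ

/-- `σ` is a free face of `K` with unique maximal coface `τ`:
`σ` is a nonempty non-maximal face contained in exactly one maximal face `τ`. -/
def IsFreePair {V : Type*} (K : Finset (Finset V)) (σ τ : Finset V) : Prop :=
  σ ∈ K ∧ σ.Nonempty ∧ ¬ IsMaximalFace K σ ∧
    IsMaximalFace K τ ∧ σ ⊆ τ ∧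
    ∀ τ', IsMaximalFace K τ' → σ ⊆ τ' → τ' = τ

/-- The elementary collapse of `K` at the face `σ`:
remove `σ` and all faces above `σ`. -/
def collapseAt {V : Type*} [DecidableEq V] (K : Finset (Finset V)) (σ : Finset V) :
    Finset (Finset V) :=
  K.filter fun ϑ => ¬ σ ⊆ ϑ

/-- `K'` is an elementary collapse of `K`. -/
def ElemCollapse {V : Type*} [DecidableEq V] (K K' : Finset (Finset V)) : Prop :=
  ∃ σ τ : Finset V, IsFreePair K σ τ ∧ K' = collapseAt K σ

/-- `K` collapses to `L`: a (possibly empty) sequence of elementary collapses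
leads from `K` to `L`. -/
def CollapsesTo {V : Type*} [DecidableEq V] (K L : Finset (Finset V)) : Prop :=
  Relation.ReflTransGen ElemCollapse K L

/-- `K` has dimension exactly `d`: every face has at most `d + 1` vertices and
some face has exactly `d + 1` vertices (the dimension of a face `α` is `|α| - 1`). -/
def DimEq {V : Type*} (K : Finset (Finset V)) (d : ℕ) : Prop :=
  (∀ α ∈ K, α.card ≤ d + 1) ∧ ∃ α ∈ K, α.card = d + 1

/-- The constrain complex of the pair `(M, L)`:
faces of `L` contained in some face of `M \ L`. -/
def constrainComplex {V : Type*} [DecidableEq V] (M L : Finset (Finset V)) :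
    Finset (Finset V) :=
  L.filter fun ϑ => ∃ η ∈ M \ L, ϑ ⊆ η

/-! A `d`-face of `M` survives the first `j` collapses: being maximal in every `Ks i`, it could
only be removed at step `i` as the coface `τs i`, which is not in `M`. So a `d`-face of `M`
through `η ⊇ σs j` is a maximal face of `Ks j` containing the free face `σs j`, hence equals
`τs j`; a codimension-one face with a unique top-dimensional coface is free. -/

section

variable {V : Type*}

theorem CollapsesTo.subset [DecidableEq V] {K L : Finset (Finset V)}
    (h : CollapsesTo K L) : L ⊆ K := by
  induction h with
  | refl => exact Finset.Subset.refl K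
  | tail _ hstep ih =>
    obtain ⟨σ, τ, -, rfl⟩ := hstep
    exact (Finset.filter_subset _ _).trans ih

theorem isMaximalFace_of_card_eq {K : Finset (Finset V)} {τ : Finset V} {n : ℕ}
    (hdim : ∀ α ∈ K, α.card ≤ n) (hτ : τ ∈ K) (hcard : τ.card = n) :
    IsMaximalFace K τ :=
  ⟨hτ, fun η hη hτη => (Finset.eq_of_subset_of_card_le hτη (hcard ▸ hdim η hη)).symm⟩

theorem card_eq_succ_of_ssubset {K : Finset (Finset V)} {η τ : Finset V} {n : ℕ}
    (hdim : ∀ α ∈ K, α.card ≤ n + 1) (hτ : τ ∈ K) (hητ : η ⊂ τ) (hη : η.card = n) :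
    τ.card = n + 1 := by
  have := Finset.card_lt_card hητ
  have := hdim τ hτ
  omega

theorem IsFreePair.eq_of_isMaximalFace {K : Finset (Finset V)} {σ τ τ' : Finset V}
    (h : IsFreePair K σ τ) (hτ' : IsMaximalFace K τ') (hστ' : σ ⊆ τ') : τ' = τ :=
  h.2.2.2.2.2 τ' hτ' hστ'

theorem IsFreePair.mem_collapseAt [DecidableEq V] {K : Finset (Finset V)}
    {σ τ ϑ : Finset V} (h : IsFreePair K σ τ) (hϑ : IsMaximalFace K ϑ) (hne : ϑ ≠ τ) :
    ϑ ∈ collapseAt K σ :=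
  Finset.mem_filter.2 ⟨hϑ.1, fun hσϑ => hne (h.eq_of_isMaximalFace hϑ hσϑ)⟩

theorem isFreePair_of_unique_coface {M : Finset (Finset V)} {η τ : Finset V} {n : ℕ}
    (hM : IsComplex M) (hdim : ∀ α ∈ M, α.card ≤ n + 1) (hτ : τ ∈ M) (hητ : η ⊂ τ)
    (hηcard : η.card = n) (hη : η.Nonempty)
    (huniq : ∀ ϑ ∈ M, ϑ.card = n + 1 → η ⊆ ϑ → ϑ = τ) :
    IsFreePair M η τ := by
  have hηnotmax : ¬ IsMaximalFace M η := fun hmax => hητ.ne (hmax.2 τ hτ hητ.subset).symm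
  refine ⟨hM τ hτ η hητ.subset, hη, hηnotmax,
    isMaximalFace_of_card_eq hdim hτ (card_eq_succ_of_ssubset hdim hτ hητ hηcard),
    hητ.subset, fun τ' hτ' hητ' => huniq τ' hτ'.1 ?_ hητ'⟩
  have hne : η ≠ τ' := by
    rintro rfl
    exact hηnotmax hτ'
  exact card_eq_succ_of_ssubset hdim hτ'.1 (hητ'.ssubset_of_ne hne) hηcard

/-- `m` counts the complexes `Ks 0, …, Ks (m - 1)`, not the collapses. -/
def IsCollapseSeq [DecidableEq V] (Ks : ℕ → Finset (Finset V)) (σs τs : ℕ → Finset V)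
    (m : ℕ) : Prop :=
  ∀ i, i + 1 < m → IsFreePair (Ks i) (σs i) (τs i) ∧ Ks (i + 1) = collapseAt (Ks i) (σs i)

section IsCollapseSeq

variable [DecidableEq V] {Ks : ℕ → Finset (Finset V)} {σs τs : ℕ → Finset V} {m : ℕ}

theorem IsCollapseSeq.subset_zero (hs : IsCollapseSeq Ks σs τs m) :
    ∀ i < m, Ks i ⊆ Ks 0
  | 0, _ => Finset.Subset.refl _
  | i + 1, hi => by
    rw [(hs i hi).2]
    exact (Finset.filter_subset _ _).trans (hs.subset_zero i (by omega))

theorem IsCollapseSeq.mem_of_ne_coface (hs : IsCollapseSeq Ks σs τs m) {ϑ : Finset V} {n : ℕ}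
    (hdim : ∀ α ∈ Ks 0, α.card ≤ n) (hϑ : ϑ ∈ Ks 0) (hcard : ϑ.card = n) :
    ∀ j < m, (∀ i < j, τs i ≠ ϑ) → ϑ ∈ Ks j
  | 0, _, _ => hϑ
  | j + 1, hj, hne => by
    obtain ⟨hfree, hnext⟩ := hs j hj
    have hϑj : ϑ ∈ Ks j := hs.mem_of_ne_coface hdim hϑ hcard j (by omega)
      fun i hi => hne i (by omega)
    have hmax : IsMaximalFace (Ks j) ϑ :=
      isMaximalFace_of_card_eq (fun α hα => hdim α (hs.subset_zero j (by omega) hα)) hϑj hcard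
    rw [hnext]
    exact hfree.mem_collapseAt hmax (hne j (Nat.lt_succ_self j)).symm

theorem IsCollapseSeq.eq_coface (hs : IsCollapseSeq Ks σs τs m) {ϑ : Finset V} {n j : ℕ}
    (hdim : ∀ α ∈ Ks 0, α.card ≤ n) (hϑ : ϑ ∈ Ks 0) (hcard : ϑ.card = n) (hj : j + 1 < m)
    (hne : ∀ i < j, τs i ≠ ϑ) (hσϑ : σs j ⊆ ϑ) : ϑ = τs j := by
  have hϑj := hs.mem_of_ne_coface hdim hϑ hcard j (by omega) hne
  have hmax : IsMaximalFace (Ks j) ϑ :=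
    isMaximalFace_of_card_eq (fun α hα => hdim α (hs.subset_zero j (by omega) hα)) hϑj hcard
  exact (hs j hj).1.eq_of_isMaximalFace hmax hσϑ

end IsCollapseSeq

end

theorem free_face_in_M_general {V : Type*} [DecidableEq V] (d m : ℕ)
    (Ks : ℕ → Finset (Finset V)) (σs τs : ℕ → Finset V)
    (K M : Finset (Finset V))
    (hK0 : Ks 0 = K)
    (hKd : DimEq K d)
    (hstep : ∀ i, i + 1 < m →
      IsFreePair (Ks i) (σs i) (τs i) ∧ Ks (i + 1) = collapseAt (Ks i) (σs i))
    (hMcomplex : IsComplex M) (hKM : CollapsesTo K M)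
    (j : ℕ) (hjlt : j + 1 < m) (hjM : τs j ∈ M)
    (hjmin : ∀ i < j, τs i ∉ M)
    (η : Finset V) (hηcard : η.card = d) (hση : σs j ⊆ η) (hητ : η ⊂ τs j) :
    (τs j ∈ M ∧ η ⊆ τs j ∧
      ∀ ϑ ∈ M, ϑ.card = d + 1 → η ⊆ ϑ → ϑ = τs j) ∧
      IsFreePair M η (τs j) := by
  subst hK0
  have hMK : M ⊆ Ks 0 := hKM.subset
  have hdimM : ∀ α ∈ M, α.card ≤ d + 1 := fun α hα => hKd.1 α (hMK hα)
  have huniq : ∀ ϑ ∈ M, ϑ.card = d + 1 → η ⊆ ϑ → ϑ = τs j :=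
    fun ϑ hϑ hcard hηϑ => IsCollapseSeq.eq_coface hstep hKd.1 (hMK hϑ) hcard hjlt
      (fun i hi hτi => hjmin i hi (hτi ▸ hϑ)) (hση.trans hηϑ)
  have hη : η.Nonempty := (hstep j hjlt).1.2.1.mono hση
  exact ⟨⟨hjM, hητ.subset, huniq⟩,
    isFreePair_of_unique_coface hMcomplex hdimM hjM hητ hηcard hη huniq⟩

/-- Suppose the `d`-dimensional complex `K = Ks 0` collapses to the
`(d-1)`-dimensional complex `L = Ks (m - 1)` via elementary collapses at free
faces `σs i` with unique maximal cofaces `τs i`, and `K` also collapses to a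
`d`-dimensional complex `M`. Let `j` be the smallest index with `τs j ∈ M` and
let `η` be any `(d-1)`-dimensional face with `σs j ⊆ η ⊊ τs j`. Then `τs j` is
the unique `d`-dimensional face of `M` containing `η`; in particular `η` is a
free face of `M` (with unique maximal coface `τs j`). -/
theorem free_face_in_M {V : Type*} [DecidableEq V] (d m : ℕ)
    (hd : 1 ≤ d) (hm : 1 ≤ m)
    (Ks : ℕ → Finset (Finset V)) (σs τs : ℕ → Finset V)
    (K L M : Finset (Finset V))
    (hK0 : Ks 0 = K) (hKlast : Ks (m - 1) = L)
    (hKcomplex : IsComplex K) (hKd : DimEq K d)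
    (hstep : ∀ i, i + 1 < m →
      IsFreePair (Ks i) (σs i) (τs i) ∧ Ks (i + 1) = collapseAt (Ks i) (σs i))
    (hLd : DimEq L (d - 1))
    (hMcomplex : IsComplex M) (hKM : CollapsesTo K M) (hMd : DimEq M d)
    (j : ℕ) (hjlt : j + 1 < m) (hjM : τs j ∈ M)
    (hjmin : ∀ i < j, τs i ∉ M)
    (η : Finset V) (hηcard : η.card = d) (hση : σs j ⊆ η) (hητ : η ⊂ τs j) :
    (τs j ∈ M ∧ η ⊆ τs j ∧
      ∀ ϑ ∈ M, ϑ.card = d + 1 → η ⊆ ϑ → ϑ = τs j) ∧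
      IsFreePair M η (τs j) :=
  free_face_in_M_general d m Ks σs τs K M hK0 hKd hstep hMcomplex hKM j hjlt hjM hjmin η hηcard hση
    hητ
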